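/- arXiv:gr-qc/9901063 — 2 statements merged into one kernel-verified Lean document; each statement's English description precedes it below -/
import Mathlib

section
/- In the two-dimensional yarmulke Morse geometry, write Z = √(ζ−1) and let q = (a,0) with 0 < a < ε. Then the chronological future of q is the complement in N of the closed region bounded by the two future-directed null spirals from q: I⁺(q) = {p ∈ N : |p| > a e^{|φ_p|/Z}}, where φ_p ∈ (−π, π] is the angle of p (i.e. p = |p|(cos φ_p, sin φ_p)). -/
/-!
Identify `ℝ²` with `ℂ`. By Lagrange's identity `g_p(v,v) = 4((p × v)² − (ζ−1)(p·v)²)`, so `v`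
is future-directed timelike at `p` exactly when the logarithmic derivative `v / p` lies in the
open convex cone `|Im u| < Z Re u`, `Z = √(ζ−1)`. Along a timelike curve from `q`,
`γ(1) = q · exp (∫ γ'/γ)` and the integral stays in the cone; conversely every `L` in the cone
is realised by the timelike logarithmic spiral `t ↦ q e^{tL}`. So
`I⁺(q) = N ∩ {q e^L : L in the cone}`, and for `q = a > 0` this is `{p : |p| > a e^{|arg p|/Z}}`,
because `arg (e^L)` is `Im L` reduced into `(−π, π]`, which can only decrease its absolute value.
-/

noncomputable section

open Set

/-- The punctured disc `N = {p : 0 < |p| < ε}` (Euclidean norm). -/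
def NY (ε : ℝ) : Set (ℝ × ℝ) :=
  {p | 0 < p.1 ^ 2 + p.2 ^ 2 ∧ p.1 ^ 2 + p.2 ^ 2 < ε ^ 2}

/-- Euclidean dot product on ℝ². -/
def dot2 (a b : ℝ × ℝ) : ℝ := a.1 * b.1 + a.2 * b.2

/-- Planar cross product `p × w = p₁w₂ − p₂w₁`. -/
def cross2 (a b : ℝ × ℝ) : ℝ := a.1 * b.2 - a.2 * b.1

/-- The yarmulke Morse metric (quadratic form) built from `f(p) = |p|²`:
`g_p(w,w) = 4|p|²|w|² − 4ζ(p·w)²`. -/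
def gY (ζ : ℝ) (p w : ℝ × ℝ) : ℝ :=
  4 * dot2 p p * dot2 w w - 4 * ζ * dot2 p w ^ 2

/-- A future-directed timelike curve: a C¹ curve in `N` with everywhere timelike
tangent satisfying the future-pointing condition `γ(t)·γ'(t) > 0`. -/
def TimelikeY (ζ ε : ℝ) (γ γ' : ℝ → ℝ × ℝ) : Prop :=
  (∀ t ∈ Icc (0 : ℝ) 1, HasDerivAt γ (γ' t) t) ∧
  ContinuousOn γ' (Icc (0 : ℝ) 1) ∧
  (∀ t ∈ Icc (0 : ℝ) 1, γ t ∈ NY ε) ∧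
  (∀ t ∈ Icc (0 : ℝ) 1, gY ζ (γ t) (γ' t) < 0) ∧
  (∀ t ∈ Icc (0 : ℝ) 1, 0 < dot2 (γ t) (γ' t))

/-- The chronology relation `q ≪ p`. -/
def chronY (ζ ε : ℝ) (q p : ℝ × ℝ) : Prop :=
  ∃ γ γ', TimelikeY ζ ε γ γ' ∧ γ 0 = q ∧ γ 1 = p

def IplusY (ζ ε : ℝ) (q : ℝ × ℝ) : Set (ℝ × ℝ) := {p ∈ NY ε | chronY ζ ε q p}

def IminusY (ζ ε : ℝ) (q : ℝ × ℝ) : Set (ℝ × ℝ) := {p ∈ NY ε | chronY ζ ε p q}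

/-- The angle `φ_p ∈ (−π, π]` of a point of the plane. -/
def ang (p : ℝ × ℝ) : ℝ := Complex.arg ((p.1 : ℂ) + (p.2 : ℂ) * Complex.I)

open Complex

abbrev toComplex : (ℝ × ℝ) ≃L[ℝ] ℂ := equivRealProdCLM.symm

@[simp]
lemma toComplex_re (p : ℝ × ℝ) : (toComplex p).re = p.1 := by
  simp [equivRealProdCLM_symm_apply]

@[simp]
lemma toComplex_im (p : ℝ × ℝ) : (toComplex p).im = p.2 := by
  simp [equivRealProdCLM_symm_apply]

lemma sq_add_sq_eq_norm_toComplex_sq (p : ℝ × ℝ) : p.1 ^ 2 + p.2 ^ 2 = ‖toComplex p‖ ^ 2 := by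
  rw [Complex.sq_norm, normSq_apply, toComplex_re, toComplex_im]
  ring

lemma dot2_self_eq_norm_toComplex_sq (p : ℝ × ℝ) : dot2 p p = ‖toComplex p‖ ^ 2 := by
  rw [← sq_add_sq_eq_norm_toComplex_sq, dot2]
  ring

lemma mem_NY_iff (ε : ℝ) (p : ℝ × ℝ) :
    p ∈ NY ε ↔ toComplex p ≠ 0 ∧ ‖toComplex p‖ ^ 2 < ε ^ 2 := by
  rw [NY, mem_ofPred_eq, sq_add_sq_eq_norm_toComplex_sq, sq_pos_iff, norm_ne_zero_iff]

lemma ang_eq_arg_toComplex (p : ℝ × ℝ) : ang p = arg (toComplex p) := by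
  rw [ang, equivRealProdCLM_symm_apply]

lemma gY_eq_cross2_dot2 (ζ : ℝ) (p v : ℝ × ℝ) :
    gY ζ p v = 4 * (cross2 p v ^ 2 - (ζ - 1) * dot2 p v ^ 2) := by
  simp only [gY, dot2, cross2]
  ring

lemma re_toComplex_div (p v : ℝ × ℝ) :
    (toComplex v / toComplex p).re = dot2 p v / dot2 p p := by
  simp only [div_re, normSq_apply, toComplex_re, toComplex_im, dot2]
  ring

lemma im_toComplex_div (p v : ℝ × ℝ) :
    (toComplex v / toComplex p).im = cross2 p v / dot2 p p := by
  simp only [div_im, normSq_apply, toComplex_re, toComplex_im, dot2, cross2]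
  ring

def futureCone (Z : ℝ) : Set ℂ := {u | |u.im| < Z * u.re}

lemma re_pos_of_mem_futureCone {Z : ℝ} {u : ℂ} (hZ : 0 ≤ Z) (hu : u ∈ futureCone Z) :
    0 < u.re :=
  pos_of_mul_pos_right ((abs_nonneg _).trans_lt hu) hZ

lemma gY_neg_and_dot2_pos_iff {ζ : ℝ} (hζ : 1 < ζ) {p : ℝ × ℝ} (hp : toComplex p ≠ 0)
    (v : ℝ × ℝ) :
    gY ζ p v < 0 ∧ 0 < dot2 p v ↔ toComplex v / toComplex p ∈ futureCone √(ζ - 1) := by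
  set Z := √(ζ - 1)
  have hZ : 0 < Z := Real.sqrt_pos.2 (sub_pos.2 hζ)
  have hZ2 : Z ^ 2 = ζ - 1 := Real.sq_sqrt (sub_pos.2 hζ).le
  have hn : 0 < dot2 p p := by
    rw [dot2_self_eq_norm_toComplex_sq]
    positivity
  rw [futureCone, mem_ofPred_eq, re_toComplex_div, im_toComplex_div, abs_div, abs_of_pos hn,
    mul_div_assoc', div_lt_div_iff_of_pos_right hn, gY_eq_cross2_dot2, ← hZ2]
  constructor
  · rintro ⟨hg, hd⟩
    exact abs_lt_of_sq_lt_sq (by nlinarith) (by positivity)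
  · intro h
    have hd : 0 < dot2 p v := pos_of_mul_pos_right ((abs_nonneg _).trans_lt h) hZ.le
    have := sq_lt_sq' (neg_lt_of_abs_lt h) (lt_of_abs_lt h)
    exact ⟨by nlinarith, hd⟩

lemma intervalIntegral_mem_futureCone {Z a b : ℝ} {f : ℝ → ℂ} (hab : a < b)
    (hf : ContinuousOn f (Icc a b)) (hmem : ∀ t ∈ Icc a b, f t ∈ futureCone Z) :
    ∫ t in a..b, f t ∈ futureCone Z := by
  have hint : IntervalIntegrable f MeasureTheory.volume a b :=
    hf.intervalIntegrable_of_Icc hab.le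
  calc |(∫ t in a..b, f t).im| = |∫ t in a..b, (f t).im| :=
        congrArg abs (intervalIntegral.intervalIntegral_im hint).symm
    _ ≤ ∫ t in a..b, |(f t).im| := intervalIntegral.abs_integral_le_integral_abs hab.le
    _ < ∫ t in a..b, Z * (f t).re := by
        refine intervalIntegral.integral_lt_integral_of_continuousOn_of_le_of_exists_lt hab
          (continuous_abs.comp_continuousOn (continuous_im.comp_continuousOn hf))
          (continuousOn_const.mul (continuous_re.comp_continuousOn hf))
          (fun t ht => (hmem t (Ioc_subset_Icc_self ht)).le)
          ⟨a, left_mem_Icc.2 hab.le, hmem a (left_mem_Icc.2 hab.le)⟩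
    _ = Z * (∫ t in a..b, f t).re := by
        rw [intervalIntegral.integral_const_mul]
        exact congrArg _ (intervalIntegral.intervalIntegral_re hint)

lemma eq_mul_exp_integral_div_of_hasDerivAt {z w : ℝ → ℂ} {a b : ℝ} (hab : a ≤ b)
    (hz : ∀ t ∈ Icc a b, HasDerivAt z (w t) t) (hz0 : ∀ t ∈ Icc a b, z t ≠ 0)
    (hw : ContinuousOn w (Icc a b)) :
    z b = z a * exp (∫ t in a..b, w t / z t) := by
  have hzc : ContinuousOn z (Icc a b) := fun t ht => (hz t ht).continuousAt.continuousWithinAt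
  -- extend `w / z` continuously to all of `ℝ`, so that its primitive is differentiable everywhere
  set ω : ℝ → ℂ := IccExtend hab (Icc a b |>.domRestrict fun t => w t / z t)
  have hω : Continuous ω := (hw.div hzc hz0).domRestrict.Icc_extend'
  have hωeq : EqOn ω (fun t => w t / z t) (Icc a b) := fun t ht => IccExtend_of_mem _ _ ht
  set L : ℝ → ℂ := fun u => ∫ t in a..u, ω t
  have hL : ∀ t, HasDerivAt L (ω t) t := fun t => (hω.integral_hasStrictDerivAt a t).hasDerivAt
  have hLc : Continuous L := continuous_iff_continuousAt.2 fun t => (hL t).continuousAt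
  have hconst := constant_of_has_deriv_right_zero (f := fun t => z t * exp (-L t))
    (hzc.mul (continuous_exp.comp hLc.neg).continuousOn) (fun t ht => ?_) b (right_mem_Icc.2 hab)
  · have hLb : L b = ∫ t in a..b, w t / z t :=
      intervalIntegral.integral_congr (by rwa [uIcc_of_le hab])
    simp only [L, intervalIntegral.integral_same, neg_zero, exp_zero, mul_one] at hconst
    rw [← hLb, ← hconst, mul_assoc, ← exp_add, neg_add_cancel, exp_zero, mul_one]
  · have ht' := Ico_subset_Icc_self ht
    have hD : HasDerivAt (fun t => z t * exp (-L t))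
        (w t * exp (-L t) + z t * (exp (-L t) * -ω t)) t := (hz t ht').mul (hL t).neg.cexp
    rw [hωeq ht'] at hD
    convert hD.hasDerivWithinAt using 1
    field_simp [hz0 t ht']
    ring

lemma TimelikeY.exists_mem_futureCone {ζ ε : ℝ} (hζ : 1 < ζ) {γ γ' : ℝ → ℝ × ℝ}
    (h : TimelikeY ζ ε γ γ') :
    ∃ L ∈ futureCone √(ζ - 1), toComplex (γ 1) = toComplex (γ 0) * exp L := by
  obtain ⟨hγ, hγ', hN, hg, hdot⟩ := h
  have hz0 : ∀ t ∈ Icc (0 : ℝ) 1, toComplex (γ t) ≠ 0 := fun t ht =>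
    ((mem_NY_iff ε _).1 (hN t ht)).1
  have hw : ContinuousOn (fun t => toComplex (γ' t)) (Icc 0 1) :=
    toComplex.continuous.comp_continuousOn hγ'
  have hzc : ContinuousOn (fun t => toComplex (γ t)) (Icc 0 1) := fun t ht =>
    (toComplex.continuous.continuousAt.comp (hγ t ht).continuousAt).continuousWithinAt
  exact ⟨_, intervalIntegral_mem_futureCone zero_lt_one (hw.div hzc hz0)
      fun t ht => (gY_neg_and_dot2_pos_iff hζ (hz0 t ht) _).1 ⟨hg t ht, hdot t ht⟩,
    eq_mul_exp_integral_div_of_hasDerivAt zero_le_one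
      (fun t ht => toComplex.hasFDerivAt.comp_hasDerivAt t (hγ t ht)) hz0 hw⟩

lemma chronY_of_eq_mul_exp {ζ ε : ℝ} (hζ : 1 < ζ) {q p : ℝ × ℝ} (hp : p ∈ NY ε) {L : ℂ}
    (hL : L ∈ futureCone √(ζ - 1)) (hpq : toComplex p = toComplex q * exp L) :
    chronY ζ ε q p := by
  rw [mem_NY_iff, hpq] at hp
  obtain ⟨hp0, hpε⟩ := hp
  set z : ℝ → ℂ := fun t => toComplex q * exp (t * L)
  have hz : ∀ t, HasDerivAt z (z t * L) t := fun t => by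
    simpa [z, mul_assoc] using
      (((hasDerivAt_id t).ofReal_comp.mul_const L).cexp).const_mul (toComplex q)
  have hz0 : ∀ t, z t ≠ 0 := fun t => mul_ne_zero (left_ne_zero_of_mul hp0) (exp_ne_zero _)
  have hzε : ∀ t ≤ 1, ‖z t‖ ^ 2 < ε ^ 2 := fun t ht => by
    refine (pow_le_pow_left₀ (norm_nonneg _) ?_ 2).trans_lt hpε
    simp only [z, norm_mul, norm_exp, re_ofReal_mul]
    gcongr
    nlinarith [re_pos_of_mem_futureCone (Real.sqrt_nonneg _) hL]
  have htimelike : ∀ t, gY ζ (toComplex.symm (z t)) (toComplex.symm (z t * L)) < 0 ∧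
      0 < dot2 (toComplex.symm (z t)) (toComplex.symm (z t * L)) := fun t => by
    refine (gY_neg_and_dot2_pos_iff hζ ?_ _).2 ?_ <;>
      simp only [ContinuousLinearEquiv.apply_symm_apply]
    exacts [hz0 t, by rwa [mul_div_cancel_left₀ _ (hz0 t)]]
  have hzc : Continuous z := continuous_iff_continuousAt.2 fun t => (hz t).continuousAt
  refine ⟨fun t => toComplex.symm (z t), fun t => toComplex.symm (z t * L),
    ⟨fun t _ => toComplex.symm.hasFDerivAt.comp_hasDerivAt t (hz t),
      (toComplex.symm.continuous.comp (hzc.mul continuous_const)).continuousOn,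
      fun t ht => ?_, fun t _ => (htimelike t).1, fun t _ => (htimelike t).2⟩,
    by simp [z], by simp [z, ← hpq]⟩
  rw [mem_NY_iff, ContinuousLinearEquiv.apply_symm_apply]
  exact ⟨hz0 t, hzε t ht.2⟩

lemma chronY_iff_exists_mem_futureCone {ζ ε : ℝ} (hζ : 1 < ζ) {q p : ℝ × ℝ} (hp : p ∈ NY ε) :
    chronY ζ ε q p ↔ ∃ L ∈ futureCone √(ζ - 1), toComplex p = toComplex q * exp L := by
  refine ⟨?_, fun ⟨L, hL, hpq⟩ => chronY_of_eq_mul_exp hζ hp hL hpq⟩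
  rintro ⟨γ, γ', hγ, rfl, rfl⟩
  exact hγ.exists_mem_futureCone hζ

lemma abs_arg_exp_le_abs_im (L : ℂ) : |arg (exp L)| ≤ |L.im| := by
  by_cases h : -Real.pi < L.im ∧ L.im ≤ Real.pi
  · rw [← log_im, log_exp h.1 h.2]
  · rw [not_and_or, not_lt, not_le] at h
    exact (abs_arg_le_pi _).trans (le_abs.2 (h.symm.imp le_of_lt fun h => by linarith))

lemma exists_mem_futureCone_eq_ofReal_mul_exp_iff {Z a : ℝ} (hZ : 0 < Z) (ha : 0 < a) (u : ℂ) :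
    (∃ L ∈ futureCone Z, u = a * exp L) ↔ a * Real.exp (|arg u| / Z) < ‖u‖ := by
  constructor
  · rintro ⟨L, hL, rfl⟩
    rw [norm_mul, norm_exp, norm_real, Real.norm_of_nonneg ha.le, arg_real_mul _ ha]
    gcongr
    rw [div_lt_iff₀ hZ]
    linarith [abs_arg_exp_le_abs_im L, hL.trans_eq (mul_comm Z L.re)]
  · intro h
    have hu : 0 < ‖u‖ / a := div_pos ((by positivity : 0 < a * _).trans h) ha
    have hua : u / a ≠ 0 :=
      norm_pos_iff.1 (by rwa [norm_div, norm_real, Real.norm_of_nonneg ha.le])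
    refine ⟨log (u / a), ?_, by rw [exp_log hua, mul_div_cancel₀ _ (ofReal_ne_zero.2 ha.ne')]⟩
    rw [futureCone, mem_ofPred_eq, log_im, log_re, norm_div, norm_real, Real.norm_of_nonneg ha.le,
      div_eq_mul_inv, ← ofReal_inv, arg_mul_real (inv_pos.2 ha), ← div_lt_iff₀' hZ,
      Real.lt_log_iff_exp_lt hu, lt_div_iff₀' ha]
    exact h

theorem stmt8_general (ζ ε a : ℝ) (hζ : 1 < ζ) (ha : 0 < a) :
    IplusY ζ ε (a, 0) =
      {p ∈ NY ε |
        a * Real.exp (|ang p| / Real.sqrt (ζ - 1)) < Real.sqrt (p.1 ^ 2 + p.2 ^ 2)} := by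
  ext p
  have hq : toComplex (a, 0) = a := Complex.ext (by simp) (by simp)
  rw [IplusY, mem_sep_iff, mem_sep_iff, sq_add_sq_eq_norm_toComplex_sq,
    Real.sqrt_sq (norm_nonneg _), ang_eq_arg_toComplex,
    ← exists_mem_futureCone_eq_ofReal_mul_exp_iff (Real.sqrt_pos.2 (sub_pos.2 hζ)) ha, ← hq]
  exact and_congr_right (chronY_iff_exists_mem_futureCone hζ)

/-- in the yarmulke, the chronological future of `q = (a,0)` (`0 < a < ε`)
is the complement in `N` of the closed region bounded by the two future-directed null
spirals: `I⁺(q) = {p ∈ N : |p| > a e^{|φ_p|/Z}}` with `Z = √(ζ−1)`. -/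
theorem stmt8 (ζ ε a : ℝ) (hζ : 1 < ζ) (hε : 0 < ε) (ha : 0 < a) (haε : a < ε) :
    IplusY ζ ε (a, 0) =
      {p ∈ NY ε |
        a * Real.exp (|ang p| / Real.sqrt (ζ - 1)) < Real.sqrt (p.1 ^ 2 + p.2 ^ 2)} :=
  stmt8_general ζ ε a hζ ha
end
end

section
/- In the neighbourhood Morse geometry of type (1, n−1) with n ≥ 2 (index λ = 1), define the future-inextendible timelike curve ω₁(t) = ((ε/2)e^{−t}, 0) ∈ N for t ∈ [0,∞), where the first coordinate is the ℝ¹ = ℝ^λ factor. Then the chronological past of ω₁ is one of the two components of the past region of the Morse point: {p ∈ N : p ≪ ω₁(t) for some t ≥ 0} = P₁ = {(x,y) ∈ N : |y| < m₁ x}. -/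
noncomputable section

open Set

/-- Points of `ℝⁿ = ℝ^λ × ℝ^{n−λ}`. -/
abbrev Pt (n lam : ℕ) := EuclideanSpace ℝ (Fin lam) × EuclideanSpace ℝ (Fin (n - lam))

/-- The Euclidean inner product on `ℝⁿ = ℝ^λ × ℝ^{n−λ}`. -/
def iprod {n lam : ℕ} (v w : Pt n lam) : ℝ :=
  (inner ℝ v.1 w.1 : ℝ) + (inner ℝ v.2 w.2 : ℝ)

/-- The punctured ball `N = {p : 0 < |p| < ε}` (Euclidean norm). -/
def NN (n lam : ℕ) (ε : ℝ) : Set (Pt n lam) :=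
  {p | 0 < ‖p.1‖ ^ 2 + ‖p.2‖ ^ 2 ∧ ‖p.1‖ ^ 2 + ‖p.2‖ ^ 2 < ε ^ 2}

/-- The Euclidean gradient of the Morse function `f(x,y) = −|x|² + |y|²`. -/
def gradf {n lam : ℕ} (p : Pt n lam) : Pt n lam :=
  ((-2 : ℝ) • p.1, (2 : ℝ) • p.2)

/-- The Morse metric with flat auxiliary metric (as a quadratic form):
`g_p(w,w) = |∇f(p)|²⟨w,w⟩ − ζ⟨∇f(p),w⟩²`. -/
def gN (ζ : ℝ) {n lam : ℕ} (p w : Pt n lam) : ℝ :=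
  iprod (gradf p) (gradf p) * iprod w w - ζ * iprod (gradf p) w ^ 2

def m1 (ζ : ℝ) : ℝ := (Real.sqrt ζ - 1) / Real.sqrt (ζ - 1)
def m2 (ζ : ℝ) : ℝ := (Real.sqrt ζ + 1) / Real.sqrt (ζ - 1)

/-- A future-directed timelike curve: a C¹ curve in `N` with everywhere timelike,
future-pointing (`⟨∇f(γ), γ'⟩ > 0`) tangent. -/
def Timelike (ζ ε : ℝ) {n lam : ℕ} (γ γ' : ℝ → Pt n lam) : Prop :=
  (∀ t ∈ Icc (0 : ℝ) 1, HasDerivAt γ (γ' t) t) ∧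
  ContinuousOn γ' (Icc (0 : ℝ) 1) ∧
  (∀ t ∈ Icc (0 : ℝ) 1, γ t ∈ NN n lam ε) ∧
  (∀ t ∈ Icc (0 : ℝ) 1, gN ζ (γ t) (γ' t) < 0) ∧
  (∀ t ∈ Icc (0 : ℝ) 1, 0 < iprod (gradf (γ t)) (γ' t))

/-- The chronology relation `q ≪ p`. -/
def chron (ζ ε : ℝ) {n lam : ℕ} (q p : Pt n lam) : Prop :=
  ∃ γ γ', Timelike ζ ε γ γ' ∧ γ 0 = q ∧ γ 1 = p

def Iplus (ζ ε : ℝ) {n lam : ℕ} (q : Pt n lam) : Set (Pt n lam) :=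
  {p ∈ NN n lam ε | chron ζ ε q p}

def Iminus (ζ ε : ℝ) {n lam : ℕ} (q : Pt n lam) : Set (Pt n lam) :=
  {p ∈ NN n lam ε | chron ζ ε p q}

/-- The common past `↓U` (interior in the open set `N` of the set of points
chronologically preceding every point of `U`). -/
def downSet (ζ ε : ℝ) {n lam : ℕ} (U : Set (Pt n lam)) : Set (Pt n lam) :=
  interior {p ∈ NN n lam ε | ∀ u ∈ U, chron ζ ε p u}

/-- The common future `↑U`. -/
def upSet (ζ ε : ℝ) {n lam : ℕ} (U : Set (Pt n lam)) : Set (Pt n lam) :=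
  interior {p ∈ NN n lam ε | ∀ u ∈ U, chron ζ ε u p}

/-!
The constant `m₁` is a null slope, `ζ (1 - m₁²)² = (1 + m₁²)²`: the direction `(1, m₁)` is null at
the points of the cone `|y| = m₁ x`, so this cone is a null hypersurface. Along a future timelike
curve the function `|y| - m₁ x` therefore has positive derivative wherever it vanishes, and no such
curve enters `P₁ = {|y| < m₁ x}` from outside; since `ω₁` runs inside `P₁`, its past lies in `P₁`.
Conversely, from `(x, y) ∈ P₁` the straight segment to a point `(x₁, 0)` of `ω₁` chosen with
`|y| < m₁ (x - x₁)` is future timelike: its velocity `-(x - x₁, y)` has slope below the null slope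
`m₁`, and is therefore timelike at every point of the segment.
-/

open Filter Topology RealInnerProductSpace

theorem nonneg_of_hasDerivWithinAt_pos_of_eq_zero {F : ℝ → ℝ} {a b : ℝ}
    (hF : ContinuousOn F (Icc a b)) (ha : 0 ≤ F a)
    (hzero : ∀ t ∈ Ico a b, F t = 0 → ∃ D, 0 < D ∧ HasDerivWithinAt F D (Ici t) t) :
    ∀ t ∈ Icc a b, 0 ≤ F t := by
  refine IsClosed.Icc_subset_of_forall_exists_gt (s := {t | 0 ≤ F t}) ?_ ha ?_
  · rw [inter_comm]
    exact hF.preimage_isClosed_of_isClosed isClosed_Icc isClosed_Ici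
  rintro t ⟨ht, htI⟩ u hu
  suffices ∀ᶠ z in 𝓝[>] t, 0 < F z from
    ((this.and (Ioc_mem_nhdsGT hu)).exists).imp fun z hz => ⟨hz.1.le, hz.2⟩
  rcases (show 0 ≤ F t from ht).eq_or_lt with h | h
  · obtain ⟨D, hD, hder⟩ := hzero t htI h.symm
    have hslope : Tendsto (slope F t) (𝓝[>] t) (𝓝 D) :=
      (hasDerivWithinAt_iff_tendsto_slope' self_notMem_Ioi).1 (hder.mono Ioi_subset_Ici_self)
    filter_upwards [hslope.eventually (lt_mem_nhds hD), self_mem_nhdsWithin] with z hz hzt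
    rw [slope_def_field, ← h, sub_zero] at hz
    exact (div_pos_iff_of_pos_right (sub_pos.2 hzt)).1 hz
  · have hIcc : Icc a b ∈ 𝓝[>] t :=
      mem_of_superset (Ioc_mem_nhdsGT htI.2)
        (Ioc_subset_Icc_self.trans' (Ioc_subset_Ioc_left htI.1))
    exact nhdsWithin_le_of_mem hIcc
      ((hF t (Ico_subset_Icc_self htI)).eventually (lt_mem_nhds h))

theorem HasDerivAt.norm_of_ne_zero {E : Type*} [NormedAddCommGroup E] [InnerProductSpace ℝ E]
    {f : ℝ → E} {f' : E} {t : ℝ} (hf : HasDerivAt f f' t) (h0 : f t ≠ 0) :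
    HasDerivAt (fun s => ‖f s‖) (⟪f t, f'⟫ / ‖f t‖) t := by
  have h := hf.norm_sq.sqrt (by positivity)
  simp only [Real.sqrt_sq (norm_nonneg _)] at h
  convert h using 1
  field_simp

section Prod

variable {𝕜 E F : Type*} [NontriviallyNormedField 𝕜] [NormedAddCommGroup E] [NormedSpace 𝕜 E]
  [NormedAddCommGroup F] [NormedSpace 𝕜 F] {f : 𝕜 → E × F} {f' : E × F} {t : 𝕜}

theorem HasDerivAt.fst (hf : HasDerivAt f f' t) : HasDerivAt (fun s => (f s).1) f'.1 t :=
  (ContinuousLinearMap.fst 𝕜 E F).hasFDerivAt.comp_hasDerivAt t hf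

theorem HasDerivAt.snd (hf : HasDerivAt f f' t) : HasDerivAt (fun s => (f s).2) f'.2 t :=
  (ContinuousLinearMap.snd 𝕜 E F).hasFDerivAt.comp_hasDerivAt t hf

end Prod

section NullSlope

variable {ζ m : ℝ}

theorem mul_lt_of_timelike_of_null_slope (hm : 0 < m)
    (hnull : ζ * (1 - m ^ 2) ^ 2 = (1 + m ^ 2) ^ 2) {X β : ℝ} (hfut : 0 < m * β - X)
    (htl : (1 + m ^ 2) * (X ^ 2 + β ^ 2) < ζ * (m * β - X) ^ 2) :
    m * X < β := by
  have hm2 : 0 < (1 - m ^ 2) ^ 2 := by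
    refine (sq_nonneg _).lt_of_ne fun h => ?_
    rw [← h, mul_zero] at hnull
    nlinarith
  -- In the coordinates `A = m β - X`, `L = β - m X` (a basis, as `m² ≠ 1`) the timelike
  -- condition becomes `(1 + m²) L² < 4 m A L`, which forces `L` to have the sign of `A`.
  have hgram : (1 - m ^ 2) ^ 2 * (X ^ 2 + β ^ 2)
      = (1 + m ^ 2) * ((m * β - X) ^ 2 + (β - m * X) ^ 2)
        - 4 * m * (m * β - X) * (β - m * X) := by ring
  have h : (1 + m ^ 2) * (β - m * X) ^ 2 < 4 * m * (m * β - X) * (β - m * X) := by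
    have := mul_lt_mul_of_pos_left htl hm2
    nlinarith
  have hpos : 0 < m * (m * β - X) * (β - m * X) := by nlinarith [sq_nonneg (β - m * X)]
  linarith [pos_of_mul_pos_right hpos (mul_pos hm hfut).le]

/-- `(x₁ + u d, u β)` runs along the segment from `(x₁, 0)` to `(x₁ + d, β)` and `-(d, β)` is its
velocity; the inequality says this velocity is timelike. -/
theorem timelike_segment_ineq (hm0 : 0 < m) (hm1 : m < 1)
    (hnull : ζ * (1 - m ^ 2) ^ 2 = (1 + m ^ 2) ^ 2) {x₁ d β u : ℝ} (hx₁ : 0 < x₁) (hβ : 0 ≤ β)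
    (hβd : β < m * d) (hu : 0 ≤ u) :
    ((x₁ + u * d) ^ 2 + (u * β) ^ 2) * (d ^ 2 + β ^ 2)
      < ζ * (x₁ * d + u * (d ^ 2 - β ^ 2)) ^ 2 := by
  have hd : 0 < d := by nlinarith
  have hK : 0 < d ^ 2 - β ^ 2 := by
    have : β < d := by nlinarith
    nlinarith
  have hlin : (d ^ 2 + β ^ 2) * (1 - m ^ 2) < (d ^ 2 - β ^ 2) * (1 + m ^ 2) := by nlinarith
  have hsq : (d ^ 2 + β ^ 2) ^ 2 < ζ * (d ^ 2 - β ^ 2) ^ 2 := by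
    have h1m : 0 < 1 - m ^ 2 := by nlinarith
    have := mul_self_lt_mul_self (by positivity) hlin
    nlinarith
  have hK' : d ^ 2 + β ^ 2 < ζ * (d ^ 2 - β ^ 2) := by nlinarith
  have hd' : d ^ 2 + β ^ 2 < ζ * d ^ 2 := by nlinarith
  have expand : ζ * (x₁ * d + u * (d ^ 2 - β ^ 2)) ^ 2
      - ((x₁ + u * d) ^ 2 + (u * β) ^ 2) * (d ^ 2 + β ^ 2)
      = x₁ ^ 2 * (ζ * d ^ 2 - (d ^ 2 + β ^ 2))
        + 2 * x₁ * u * d * (ζ * (d ^ 2 - β ^ 2) - (d ^ 2 + β ^ 2))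
        + u ^ 2 * (ζ * (d ^ 2 - β ^ 2) ^ 2 - (d ^ 2 + β ^ 2) ^ 2) := by ring
  have h1 : 0 < x₁ ^ 2 * (ζ * d ^ 2 - (d ^ 2 + β ^ 2)) := by nlinarith [sq_pos_of_pos hx₁]
  have h2 : 0 ≤ 2 * x₁ * u * d * (ζ * (d ^ 2 - β ^ 2) - (d ^ 2 + β ^ 2)) :=
    mul_nonneg (by positivity) (by linarith)
  have h3 : 0 ≤ u ^ 2 * (ζ * (d ^ 2 - β ^ 2) ^ 2 - (d ^ 2 + β ^ 2) ^ 2) :=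
    mul_nonneg (sq_nonneg u) (by linarith)
  linarith

end NullSlope

theorem m1_sq_mul {ζ : ℝ} (hζ : 1 < ζ) : m1 ζ ^ 2 * (√ζ + 1) = √ζ - 1 := by
  have hσ : √ζ ^ 2 = ζ := Real.sq_sqrt (by linarith)
  rw [m1, div_pow, Real.sq_sqrt (by linarith), div_mul_eq_mul_div, div_eq_iff (by linarith)]
  linear_combination (√ζ - 1) * hσ

theorem m1_pos {ζ : ℝ} (hζ : 1 < ζ) : 0 < m1 ζ :=
  div_pos (sub_pos.2 (Real.lt_sqrt zero_le_one |>.2 (by simpa using hζ)))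
    (Real.sqrt_pos.2 (by linarith))

theorem m1_lt_one {ζ : ℝ} (hζ : 1 < ζ) : m1 ζ < 1 := by
  have h := m1_sq_mul hζ
  have hsq : m1 ζ ^ 2 < 1 := by nlinarith [Real.sqrt_nonneg ζ]
  nlinarith [m1_pos hζ]

theorem m1_null_slope {ζ : ℝ} (hζ : 1 < ζ) : ζ * (1 - m1 ζ ^ 2) ^ 2 = (1 + m1 ζ ^ 2) ^ 2 := by
  have hσ : √ζ ^ 2 = ζ := Real.sq_sqrt (by linarith)
  linear_combination (-(1 - m1 ζ ^ 2) ^ 2) * hσ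
    - (√ζ * (1 - m1 ζ ^ 2) + 1 + m1 ζ ^ 2) * m1_sq_mul hζ

section Coordinates

variable {n lam : ℕ}

theorem iprod_gradf (p v : Pt n lam) : iprod (gradf p) v = 2 * (⟪p.2, v.2⟫ - ⟪p.1, v.1⟫) := by
  simp only [iprod, gradf, real_inner_smul_left]
  ring

theorem gN_eq (ζ : ℝ) (p v : Pt n lam) :
    gN ζ p v
      = 4 * (‖p.1‖ ^ 2 + ‖p.2‖ ^ 2) * (‖v.1‖ ^ 2 + ‖v.2‖ ^ 2) - ζ * iprod (gradf p) v ^ 2 := by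
  simp only [gN, iprod, gradf, real_inner_smul_left, real_inner_smul_right]
  simp only [real_inner_self_eq_norm_sq]
  ring

theorem inner_fin_one (u w : EuclideanSpace ℝ (Fin 1)) : ⟪u, w⟫ = u 0 * w 0 := by
  simp [PiLp.inner_apply, mul_comm]

theorem norm_sq_fin_one (u : EuclideanSpace ℝ (Fin 1)) : ‖u‖ ^ 2 = u 0 ^ 2 := by
  rw [← real_inner_self_eq_norm_sq, inner_fin_one, sq]

end Coordinates

theorem mul_lt_inner_div_norm_of_timelike {ζ m : ℝ} (hm : 0 < m)
    (hnull : ζ * (1 - m ^ 2) ^ 2 = (1 + m ^ 2) ^ 2) {n : ℕ} {p v : Pt n 1} (hp : 0 < p.1 0)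
    (hb : ‖p.2‖ = m * p.1 0) (htl : gN ζ p v < 0) (hfut : 0 < iprod (gradf p) v) :
    m * v.1 0 < ⟪p.2, v.2⟫ / ‖p.2‖ := by
  set a := p.1 0
  set X := v.1 0
  set β := ⟪p.2, v.2⟫ / ‖p.2‖
  have hb0 : 0 < ‖p.2‖ := hb ▸ mul_pos hm hp
  have hτ : ⟪p.2, v.2⟫ = m * a * β := by rw [← hb, mul_div_cancel₀ _ hb0.ne']
  have hβv : β ^ 2 ≤ ‖v.2‖ ^ 2 := by
    rw [div_pow, div_le_iff₀ (by positivity), ← mul_pow, ← sq_abs]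
    exact pow_le_pow_left₀ (abs_nonneg _)
      ((abs_real_inner_le_norm _ _).trans_eq (mul_comm _ _)) 2
  rw [iprod_gradf, inner_fin_one, hτ] at hfut
  rw [gN_eq, iprod_gradf, norm_sq_fin_one, norm_sq_fin_one, hb, inner_fin_one, hτ] at htl
  refine mul_lt_of_timelike_of_null_slope hm hnull (by nlinarith) ?_
  have hscale :
      4 * (a ^ 2 + (m * a) ^ 2) * (X ^ 2 + ‖v.2‖ ^ 2) - ζ * (2 * (m * a * β - a * X)) ^ 2
      = 4 * a ^ 2 * ((1 + m ^ 2) * (X ^ 2 + ‖v.2‖ ^ 2) - ζ * (m * β - X) ^ 2) := by ring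
  rw [hscale] at htl
  have := neg_of_mul_neg_right htl (by positivity)
  nlinarith

theorem mul_le_norm_of_chron {ζ ε m : ℝ} (hm : 0 < m)
    (hnull : ζ * (1 - m ^ 2) ^ 2 = (1 + m ^ 2) ^ 2) {n : ℕ} {p q : Pt n 1}
    (hpq : chron ζ ε p q) (hp : m * p.1 0 ≤ ‖p.2‖) : m * q.1 0 ≤ ‖q.2‖ := by
  obtain ⟨γ, γ', ⟨hder, -, hmem, htl, hfut⟩, rfl, rfl⟩ := hpq
  have hγ : ContinuousOn γ (Icc 0 1) := fun t ht => (hder t ht).continuousAt.continuousWithinAt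
  have hcont : Continuous fun q : Pt n 1 => ‖q.2‖ - m * q.1 0 := by fun_prop
  refine sub_nonneg.1 <| nonneg_of_hasDerivWithinAt_pos_of_eq_zero (hcont.comp_continuousOn hγ)
    (sub_nonneg.2 hp) ?_ 1 (right_mem_Icc.2 zero_le_one)
  intro t ht hzero
  have htI := Ico_subset_Icc_self ht
  have hb : ‖(γ t).2‖ = m * (γ t).1 0 := sub_eq_zero.1 hzero
  have ha : 0 < (γ t).1 0 := by
    refine (nonneg_of_mul_nonneg_right (hb ▸ norm_nonneg _) hm).lt_of_ne fun h => ?_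
    have := (hmem t htI).1
    rw [norm_sq_fin_one, hb, ← h] at this
    simp at this
  have hd := hder t htI
  have hx : HasDerivAt (fun s => (γ s).1 0) ((γ' t).1 0) t :=
    (EuclideanSpace.proj (𝕜 := ℝ) (0 : Fin 1)).hasFDerivAt.comp_hasDerivAt t hd.fst
  have hy : HasDerivAt (fun s => ‖(γ s).2‖) (⟪(γ t).2, (γ' t).2⟫ / ‖(γ t).2‖) t :=
    hd.snd.norm_of_ne_zero (norm_ne_zero_iff.1 (by rw [hb]; positivity))
  exact ⟨_, sub_pos.2 <|
      mul_lt_inner_div_norm_of_timelike hm hnull ha hb (htl t htI) (hfut t htI),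
      (hy.sub (hx.const_mul m)).hasDerivWithinAt⟩

theorem chron_single_of_lt {ζ ε m : ℝ} (hm0 : 0 < m) (hm1 : m < 1)
    (hnull : ζ * (1 - m ^ 2) ^ 2 = (1 + m ^ 2) ^ 2) {n : ℕ} {p : Pt n 1} (hp : p ∈ NN n 1 ε)
    {x₁ : ℝ} (hx₁ : 0 < x₁) (hlt : ‖p.2‖ < m * (p.1 0 - x₁)) :
    chron ζ ε p (EuclideanSpace.single 0 x₁, 0) := by
  set q : Pt n 1 := (EuclideanSpace.single 0 x₁, 0)
  set d := p.1 0 - x₁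
  set β := ‖p.2‖
  have hβ : 0 ≤ β := norm_nonneg _
  have hd : 0 < d := pos_of_mul_pos_right (hβ.trans_lt hlt) hm0.le
  have hβd : β < d := hlt.trans (mul_lt_of_lt_one_left hd hm1)
  have hγ1 (s : ℝ) : (p + s • (q - p)).1 0 = x₁ + (1 - s) * d := by simp [q, d]; ring
  have hγ2 (s : ℝ) : (p + s • (q - p)).2 = (1 - s) • p.2 := by simp [q]; module
  have hv1 : (q - p).1 0 = -d := by simp [q, d]
  have hv2 : (q - p).2 = -p.2 := by simp [q]
  have hfut (u : ℝ) (hu : 0 ≤ u) : 0 < x₁ * d + u * (d ^ 2 - β ^ 2) := by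
    have : 0 ≤ u * (d ^ 2 - β ^ 2) := mul_nonneg hu (by nlinarith)
    nlinarith
  have hiprod (s : ℝ) : iprod (gradf (p + s • (q - p))) (q - p)
      = 2 * (x₁ * d + (1 - s) * (d ^ 2 - β ^ 2)) := by
    rw [iprod_gradf, inner_fin_one, hγ1, hγ2, hv1, hv2, inner_smul_left, inner_neg_right,
      real_inner_self_eq_norm_sq]
    simp only [conj_trivial]
    ring
  refine ⟨fun s => p + s • (q - p), fun _ => q - p, ⟨fun s _ => ?_, continuousOn_const,
    fun s hs => ?_, fun s hs => ?_, fun s hs => ?_⟩, by simp, by simp⟩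
  · simpa using ((hasDerivAt_id s).smul_const (q - p)).const_add p
  · have hpε : (x₁ + d) ^ 2 + β ^ 2 < ε ^ 2 := by simpa [d, norm_sq_fin_one] using hp.2
    have hu : 0 ≤ 1 - s := sub_nonneg.2 hs.2
    have hu1 : 1 - s ≤ 1 := by linarith [hs.1]
    simp only [NN, mem_ofPred_eq]
    rw [norm_sq_fin_one, hγ1, hγ2, norm_smul, mul_pow, Real.norm_eq_abs, sq_abs]
    have hx : 0 < x₁ + (1 - s) * d := by positivity
    have hxd : x₁ + (1 - s) * d ≤ x₁ + d := by nlinarith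
    constructor
    · positivity
    · nlinarith [mul_le_mul_of_nonneg_right (pow_le_one₀ hu hu1 : (1 - s) ^ 2 ≤ 1) (sq_nonneg β)]
  · rw [gN_eq, hiprod, norm_sq_fin_one, norm_sq_fin_one, hγ1, hγ2, hv1, hv2, norm_smul, mul_pow,
      Real.norm_eq_abs, sq_abs, norm_neg]
    have := timelike_segment_ineq hm0 hm1 hnull hx₁ hβ hlt (sub_nonneg.2 hs.2)
    nlinarith
  · rw [hiprod]
    linarith [hfut (1 - s) (sub_nonneg.2 hs.2)]

theorem exists_nonneg_half_mul_exp_neg_eq {ε x : ℝ} (hx : 0 < x) (hxε : 2 * x ≤ ε) :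
    ∃ t : ℝ, 0 ≤ t ∧ ε / 2 * Real.exp (-t) = x := by
  have hε : 0 < ε := by linarith
  refine ⟨Real.log (ε / (2 * x)),
    Real.log_nonneg ((le_div_iff₀ (by positivity)).2 (by linarith)), ?_⟩
  rw [Real.exp_neg, Real.exp_log (by positivity)]
  field_simp

theorem stmt10_general (n : ℕ) (ζ ε : ℝ) (hζ : 1 < ζ) (hε : 0 < ε) :
    {p : Pt n 1 | p ∈ NN n 1 ε ∧ ∃ t : ℝ, 0 ≤ t ∧
        chron ζ ε p (EuclideanSpace.single 0 (ε / 2 * Real.exp (-t)),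
          (0 : EuclideanSpace ℝ (Fin (n - 1))))} =
      {p ∈ NN n 1 ε | ‖p.2‖ < m1 ζ * p.1 0} := by
  have hM := m1_pos hζ
  ext p
  refine ⟨fun ⟨hp, t, _, hpq⟩ => ⟨hp, lt_of_not_ge fun hle => ?_⟩, fun ⟨hp, hlt⟩ => ⟨hp, ?_⟩⟩
  · have h := mul_le_norm_of_chron hM (m1_null_slope hζ) hpq hle
    simp only [PiLp.single_apply, if_true, norm_zero] at h
    exact (mul_pos hM (by positivity)).not_ge h
  have hy : ‖p.2‖ / m1 ζ < p.1 0 := (div_lt_iff₀' hM).2 hlt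
  have hxε : p.1 0 < ε := by
    have := hp.2
    rw [norm_sq_fin_one] at this
    nlinarith [sq_nonneg ‖p.2‖]
  obtain ⟨t, ht, hx₁⟩ :=
    exists_nonneg_half_mul_exp_neg_eq (ε := ε) (x := (p.1 0 - ‖p.2‖ / m1 ζ) / 2) (by linarith) (by linarith [div_nonneg (norm_nonneg p.2) hM.le])
  refine ⟨t, ht, hx₁ ▸ chron_single_of_lt hM (m1_lt_one hζ) (m1_null_slope hζ) hp (by linarith) ?_⟩
  have : m1 ζ * (p.1 0 - (p.1 0 - ‖p.2‖ / m1 ζ) / 2) = (m1 ζ * p.1 0 + ‖p.2‖) / 2 := by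
    field_simp; ring
  linarith

/-- for index `λ = 1`, the chronological past of the
future-inextendible timelike curve `ω₁(t) = ((ε/2)e^{−t}, 0)` is one of the two
components of the past region of the Morse point:
`P₁ = {(x,y) ∈ N : |y| < m₁x}`. -/
theorem stmt10 (n : ℕ) (hn : 2 ≤ n) (ζ ε : ℝ) (hζ : 1 < ζ) (hε : 0 < ε) :
    {p : Pt n 1 | p ∈ NN n 1 ε ∧ ∃ t : ℝ, 0 ≤ t ∧
        chron ζ ε p (EuclideanSpace.single 0 (ε / 2 * Real.exp (-t)),
          (0 : EuclideanSpace ℝ (Fin (n - 1))))} =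
      {p ∈ NN n 1 ε | ‖p.2‖ < m1 ζ * p.1 0} :=
  stmt10_general n ζ ε hζ hε
end
end
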